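/- Let (T, M) be a local domain with residue field k and residue map π : T → k, and let D be an integral domain with fraction field k, viewed as a subring of k. Let S be an overring of D, i.e., a subring of k containing D. If the pullback S ×_k T = π⁻¹(S) is flat as a module over D ×_k T = π⁻¹(D), then S is flat as a D-module. -/

import Mathlib

/-!
Put `A = π⁻¹(D)` and `B = π⁻¹(S)`. The map `π` sends `A` onto `D` and `B` onto `S`, and an
element of `B` killed by `π` already lies in `A`, its image `0` being in `D`. So the kernel of
`B → S` is extended from the kernel of `A → D`, which makes `S ≅ D ⊗[A] B` the base change of the
flat `A`-module `B`.
-/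

open TensorProduct Algebra.TensorProduct

section

variable {A B D S : Type*} [CommRing A] [CommRing B] [CommRing D] [CommRing S]
  [Algebra A B] [Algebra A D] [Algebra D S] [Algebra A S] [IsScalarTower A D S]

theorem map_ker_algebraMap_le_ker_includeRight :
    (RingHom.ker (algebraMap A D)).map (algebraMap A B) ≤
      RingHom.ker (includeRight : B →ₐ[A] D ⊗[A] B) := by
  refine Ideal.map_le_iff_le_comap.2 fun a ha ↦ ?_
  rw [Ideal.mem_comap, RingHom.mem_ker, includeRight.commutes,
    Algebra.TensorProduct.algebraMap_apply, RingHom.mem_ker.1 ha, zero_tmul]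

theorem isBaseChange_of_surjective_of_ker_le_map (ψ : B →ₐ[A] S)
    (hD : Function.Surjective (algebraMap A D)) (hψ : Function.Surjective ψ)
    (hker : RingHom.ker ψ ≤ (RingHom.ker (algebraMap A D)).map (algebraMap A B)) :
    IsBaseChange D ψ.toLinearMap := by
  let L : D ⊗[A] B →ₐ[D] S := lift (Algebra.ofId D S) ψ fun _ _ ↦ .all _ _
  have hL : ∀ b, L (1 ⊗ₜ b) = ψ b := fun b ↦ by simp [L]
  have hL_surj : Function.Surjective L :=
    .of_comp (g := includeRight (R := A) (A := D)) (by convert hψ; ext; exact hL _)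
  have hL_inj : Function.Injective L := by
    refine (injective_iff_map_eq_zero L).2 fun x hx ↦ ?_
    obtain ⟨b, rfl⟩ := includeRight_surjective B hD x
    exact map_ker_algebraMap_le_ker_includeRight (hker ((hL b).symm.trans hx))
  exact .of_equiv (LinearEquiv.ofBijective L.toLinearMap ⟨hL_inj, hL_surj⟩) hL

end

namespace RingHom

variable {T k : Type*} [Ring T] [Ring k]

theorem restrict_comap_surjective {π : T →+* k} (hπ : Function.Surjective π) (D : Subring k) :
    Function.Surjective (π.restrict (D.comap π) D fun _ hx ↦ hx) := fun d ↦
  let ⟨t, ht⟩ := hπ d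
  ⟨⟨t, by simp [ht]⟩, Subtype.ext ht⟩

theorem ker_restrict_comap_le_map (π : T →+* k) {D S : Subring k} (hDS : D ≤ S) :
    ker (π.restrict (S.comap π) S fun _ hx ↦ hx) ≤
      (ker (π.restrict (D.comap π) D fun _ hx ↦ hx)).map
        (Subring.inclusion fun _ hx ↦ hDS hx : D.comap π →+* S.comap π) := by
  intro b hb
  have hπb : π b = 0 := congrArg Subtype.val hb
  have hbD : (b : T) ∈ D.comap π := by simp [hπb]
  exact Ideal.mem_map_of_mem _ (x := (⟨b, hbD⟩ : D.comap π)) (Subtype.ext hπb)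

end RingHom

theorem stmt_10 {T k : Type*} [CommRing T] [Field k]
    (π : T →+* k) (hπ : Function.Surjective π)
    (D : Subring k)
    (S : Subring k) (hDS : D ≤ S)
    (hflat : @Module.Flat (D.comap π) (S.comap π) _ _
      (RingHom.toAlgebra
        (Subring.inclusion (fun _ hx => hDS hx : D.comap π ≤ S.comap π))).toModule) :
    @Module.Flat D S _ _ (RingHom.toAlgebra (Subring.inclusion hDS)).toModule := by
  let A := D.comap π
  let B := S.comap π
  let _ : Algebra A B := (Subring.inclusion fun _ hx ↦ hDS hx : A →+* B).toAlgebra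
  let _ : Algebra A D := (π.restrict A D fun _ hx ↦ hx).toAlgebra
  let _ : Algebra D S := (Subring.inclusion hDS).toAlgebra
  let _ : Algebra A S := ((Subring.inclusion hDS).comp (algebraMap A D)).toAlgebra
  have : IsScalarTower A D S := .of_algebraMap_eq fun _ ↦ rfl
  let ψ : B →ₐ[A] S := { π.restrict B S fun _ hx ↦ hx with commutes' := fun _ ↦ rfl }
  exact Module.Flat.isBaseChange A D B S <| isBaseChange_of_surjective_of_ker_le_map ψ
    (RingHom.restrict_comap_surjective hπ D) (RingHom.restrict_comap_surjective hπ S)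
    (RingHom.ker_restrict_comap_le_map π hDS)
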